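/- arXiv:2403.06991 — 4 statements merged into one kernel-verified Lean document; each statement's English description precedes it below -/
import Mathlib

section
/- Assume ρ ≠ 0, ϱ_f φ_f ≠ 0, and that the constitutive relation c_i (u_i − (1/ρ) Σ_{j=1}^{n} c_j u_j) = f_i k − A_i holds for every i. Then for any substrate concentration s ∈ ℝ, the substrate mass flux satisfies s v_f = s v − (s/(ϱ_f φ_f)) Σ_{j=1}^{n} (f_j k − A_j). -/
/-- With the mixture density `ρ = ϱfφf + ∑ c j`, slip velocities `u i = vs i - vf`,
mass-average velocity `v = (1/ρ)(ϱfφf • vf + ∑ c j • vs j)`, the vertical unit vector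
`k = (0,0,1)`, batch flux values `f i` and compression terms `A i`: if `ρ ≠ 0`,
`ϱfφf ≠ 0` and the constitutive relation
`c i • (u i - (1/ρ) ∑ c j • u j) = f i • k - A i` holds for every `i`, then for any
substrate concentration `s ∈ ℝ` the substrate mass flux satisfies
`s • vf = s • v - (s/ϱfφf) • ∑ j (f j • k - A j)`. -/
theorem substrate_mass_flux_relation
    (n : ℕ) (hn : 1 ≤ n)
    (c : Fin n → ℝ) (ϱfφf : ℝ)
    (vf : Fin 3 → ℝ) (vs : Fin n → Fin 3 → ℝ)
    (ρ : ℝ) (hρdef : ρ = ϱfφf + ∑ j, c j)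
    (u : Fin n → Fin 3 → ℝ) (hu : ∀ i, u i = vs i - vf)
    (v : Fin 3 → ℝ) (hv : v = (1 / ρ) • (ϱfφf • vf + ∑ j, c j • vs j))
    (k : Fin 3 → ℝ) (hk : k = ![0, 0, 1])
    (f : Fin n → ℝ) (A : Fin n → Fin 3 → ℝ)
    (hρ : ρ ≠ 0) (hϱfφf : ϱfφf ≠ 0)
    (hconst : ∀ i, c i • (u i - (1 / ρ) • ∑ j, c j • u j) = f i • k - A i) :
    ∀ s : ℝ, s • vf = s • v - (s / ϱfφf) • ∑ j, (f j • k - A j) := by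
  intro s
  set T : Fin 3 → ℝ := ∑ j, c j • u j with hT
  have hsum : ∑ j, (f j • k - A j) = (ϱfφf / ρ) • T := by
    have h1 : ∑ j, (f j • k - A j) = ∑ i, c i • (u i - (1 / ρ) • T) := by
      refine Finset.sum_congr rfl fun i _ => ?_
      rw [← hconst i]
    rw [h1]
    have h2 : ∑ i, c i • (u i - (1 / ρ) • T)
        = T - ((∑ i, c i) / ρ) • T := by
      simp only [smul_sub, Finset.sum_sub_distrib, ← hT, smul_smul]
      rw [← Finset.sum_smul, ← Finset.sum_mul]
      congr 1
      ring
    rw [h2]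
    have hϱ : ϱfφf = ρ - ∑ i, c i := by rw [hρdef]; ring
    rw [hϱ]
    match_scalars
    field_simp
  have hcv : ∑ j, c j • vs j = T + (∑ j, c j) • vf := by
    rw [hT]
    rw [Finset.sum_smul, ← Finset.sum_add_distrib]
    refine Finset.sum_congr rfl fun i _ => ?_
    rw [hu i]
    module
  have hρ' : ϱfφf + ∑ j, c j ≠ 0 := hρdef ▸ hρ
  rw [hsum, hv, hcv, hρdef]
  match_scalars <;> field_simp <;> ring
end

section
/- For each layer index α ∈ {1,…,M}, the pressure-gradient term admits the rewriting h (∇p̄_α + g ρ_α ∇z̄_α) = g m_α ∇(z_B + h) + g h² ((1/2) l_α + Σ_{β=α+1}^{M} l_β) ∇ρ_α + g h Σ_{β=α+1}^{M} l_β ∇(m_β − m_α) at every point of U. -/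
/-!
Both sides are linear in the gradients of `z_B`, `h`, `ρ_α` and the `m_β`. Expanding `∇p̄_α`,
`∇z̄_α` and `∇m_α = ρ_α ∇h + h ∇ρ_α` by the product rule, the two sides agree once the weight
`Σ_{β<α} l_β` of `∇h` in `∇z̄_α` is replaced by `1 - l_α - Σ_{β>α} l_β`; the sum over the
upper layers `Σ_{β>α} l_β ∇m_β` appears on both sides and is never expanded.
-/

/-- Gradient in the two horizontal variables of a scalar field on `ℝ²`. -/
noncomputable def grad2 (f : (Fin 2 → ℝ) → ℝ) (x : Fin 2 → ℝ) : Fin 2 → ℝ :=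
  fun k => fderiv ℝ f x (Pi.single k 1)

open Finset

theorem sum_Icc_split {M : Type*} [AddCommMonoid M] (f : ℕ → M) {a n : ℕ}
    (ha : 1 ≤ a) (han : a ≤ n) :
    ∑ i ∈ Icc 1 (a - 1), f i + f a + ∑ i ∈ Icc (a + 1) n, f i = ∑ i ∈ Icc 1 n, f i := by
  obtain ⟨k, rfl⟩ := Nat.exists_eq_add_of_le' ha
  have hIoc (m : ℕ) : Icc 1 m = Ioc 0 m := Icc_add_one_left_eq_Ioc 0 m
  rw [Nat.add_sub_cancel, hIoc, hIoc, Icc_add_one_left_eq_Ioc, ← sum_Ioc_succ_top k.zero_le,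
    sum_Ioc_consecutive _ (k + 1).zero_le han]

section grad2

variable {f f₁ f₂ : (Fin 2 → ℝ) → ℝ} {x : Fin 2 → ℝ}

theorem grad2_const_mul (hf : DifferentiableAt ℝ f x) (c : ℝ) :
    grad2 (fun y => c * f y) x = c • grad2 f x := by
  ext k
  simp only [grad2, fderiv_const_mul hf, smul_apply, Pi.smul_apply]

theorem grad2_add (hf₁ : DifferentiableAt ℝ f₁ x) (hf₂ : DifferentiableAt ℝ f₂ x) :
    grad2 (fun y => f₁ y + f₂ y) x = grad2 f₁ x + grad2 f₂ x := by
  ext k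
  simp only [grad2, fderiv_fun_add hf₁ hf₂, add_apply, Pi.add_apply]

theorem grad2_sub (hf₁ : DifferentiableAt ℝ f₁ x) (hf₂ : DifferentiableAt ℝ f₂ x) :
    grad2 (fun y => f₁ y - f₂ y) x = grad2 f₁ x - grad2 f₂ x := by
  ext k
  simp only [grad2, fderiv_fun_sub hf₁ hf₂, sub_apply, Pi.sub_apply]

theorem grad2_mul (hf₁ : DifferentiableAt ℝ f₁ x) (hf₂ : DifferentiableAt ℝ f₂ x) :
    grad2 (fun y => f₁ y * f₂ y) x = f₁ x • grad2 f₂ x + f₂ x • grad2 f₁ x := by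
  ext k
  simp only [grad2, fderiv_fun_mul hf₁ hf₂, add_apply,
    smul_apply, Pi.add_apply, Pi.smul_apply]

theorem grad2_const (c : ℝ) : grad2 (fun _ => c) x = 0 := by
  ext k
  simp only [grad2, fderiv_const_apply, zero_apply, Pi.zero_apply]

theorem grad2_sum {ι : Type*} {s : Finset ι} {F : ι → (Fin 2 → ℝ) → ℝ}
    (hF : ∀ i ∈ s, DifferentiableAt ℝ (F i) x) :
    grad2 (fun y => ∑ i ∈ s, F i y) x = ∑ i ∈ s, grad2 (F i) x := by
  ext k
  simp only [grad2, fderiv_fun_sum hF, FunLike.coe_sum, Finset.sum_apply]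

theorem grad2_add_mul_add_sum_mul {ι : Type*} {s : Finset ι} {F : ι → (Fin 2 → ℝ) → ℝ}
    (hf₁ : DifferentiableAt ℝ f₁ x) (hf₂ : DifferentiableAt ℝ f₂ x)
    (hF : ∀ i ∈ s, DifferentiableAt ℝ (F i) x) (a : ℝ) (b : ι → ℝ) :
    grad2 (fun y => f₁ y + a * f₂ y + ∑ i ∈ s, b i * F i y) x =
      grad2 f₁ x + a • grad2 f₂ x + ∑ i ∈ s, b i • grad2 (F i) x := by
  rw [grad2_add (hf₁.fun_add (hf₂.const_mul a)) (.fun_sum fun i hi => (hF i hi).const_mul _),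
    grad2_add hf₁ (hf₂.const_mul a), grad2_const_mul hf₂,
    grad2_sum fun i hi => (hF i hi).const_mul _]
  exact congrArg _ (sum_congr rfl fun i hi => grad2_const_mul (hF i hi) _)

end grad2

theorem smul_pressure_gradient_eq {E : Type*} [AddCommGroup E] [Module ℝ E]
    (g h ρα : ℝ) (l : ℕ → ℝ) (α : ℕ) (s t : Finset ℕ) (Dh Dz Dρα : E) (Dm : ℕ → E)
    (hl : ∑ β ∈ t, l β + l α + ∑ β ∈ s, l β = 1) (hDm : Dm α = ρα • Dh + h • Dρα) :
    h • (((1 / 2) * g * l α) • Dm α + ∑ β ∈ s, (g * l β) • Dm β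
        + (g * ρα) • (Dz + ((1 / 2) * l α) • Dh + ∑ β ∈ t, l β • Dh)) =
      (g * (ρα * h)) • (Dz + Dh) + (g * h ^ 2 * ((1 / 2) * l α + ∑ β ∈ s, l β)) • Dρα
        + (g * h) • ∑ β ∈ s, l β • (Dm β - Dm α) := by
  simp only [smul_sub, sum_sub_distrib, ← sum_smul, mul_smul, ← smul_sum]
  rw [hDm, show ∑ β ∈ t, l β = 1 - l α - ∑ β ∈ s, l β by linarith]
  module

theorem pressure_gradient_rewriting_general
    (U : Set (Fin 2 → ℝ)) (hU : IsOpen U)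
    (g : ℝ) (M : ℕ)
    (l : ℕ → ℝ)
    (hlsum : ∑ β ∈ Finset.Icc 1 M, l β = 1)
    (pS : ℝ)
    (h zB : (Fin 2 → ℝ) → ℝ) (ρ : ℕ → (Fin 2 → ℝ) → ℝ)
    (hh : DifferentiableOn ℝ h U) (hzB : DifferentiableOn ℝ zB U)
    (hρ : ∀ α ∈ Finset.Icc 1 M, DifferentiableOn ℝ (ρ α) U)
    (m : ℕ → (Fin 2 → ℝ) → ℝ) (hm : ∀ β x, m β x = ρ β x * h x)
    (pbar zbar : ℕ → (Fin 2 → ℝ) → ℝ)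
    (hpbar : ∀ α x, pbar α x =
      pS + (1 / 2) * g * l α * m α x + ∑ β ∈ Finset.Icc (α + 1) M, g * l β * m β x)
    (hzbar : ∀ α x, zbar α x =
      zB x + (1 / 2) * l α * h x + ∑ β ∈ Finset.Icc 1 (α - 1), l β * h x) :
    ∀ α ∈ Finset.Icc 1 M, ∀ x ∈ U,
      h x • (grad2 (pbar α) x + (g * ρ α x) • grad2 (zbar α) x) =
        (g * m α x) • grad2 (fun y => zB y + h y) x
        + (g * h x ^ 2 * ((1 / 2) * l α + ∑ β ∈ Finset.Icc (α + 1) M, l β)) • grad2 (ρ α) x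
        + (g * h x) • ∑ β ∈ Finset.Icc (α + 1) M, l β • grad2 (fun y => m β y - m α y) x := by
  intro α hα x hx
  obtain ⟨hα1, hαM⟩ := mem_Icc.mp hα
  have hdiff {f : (Fin 2 → ℝ) → ℝ} (hf : DifferentiableOn ℝ f U) : DifferentiableAt ℝ f x :=
    hf.differentiableAt (hU.mem_nhds hx)
  have hupper : ∀ β ∈ Icc (α + 1) M, β ∈ Icc 1 M := fun β hβ =>
    Icc_subset_Icc (by omega) le_rfl hβ
  have hm_fun β : m β = fun y => ρ β y * h y := funext (hm β)
  have hm_diff β (hβ : β ∈ Icc 1 M) : DifferentiableAt ℝ (m β) x := by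
    rw [hm_fun]
    exact (hdiff (hρ β hβ)).mul (hdiff hh)
  have hm_grad : grad2 (m α) x = ρ α x • grad2 h x + h x • grad2 (ρ α) x := by
    rw [hm_fun, grad2_mul (hdiff (hρ α hα)) (hdiff hh), add_comm]
  rw [show pbar α = _ from funext (hpbar α), show zbar α = _ from funext (hzbar α),
    grad2_add_mul_add_sum_mul (differentiableAt_const pS) (hm_diff α hα)
      (fun β hβ => hm_diff β (hupper β hβ)),
    grad2_add_mul_add_sum_mul (hdiff hzB) (hdiff hh) (fun _ _ => hdiff hh),
    grad2_const, zero_add, hm α x, grad2_add (hdiff hzB) (hdiff hh),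
    sum_congr rfl fun β hβ =>
      congrArg (l β • ·) (grad2_sub (hm_diff β (hupper β hβ)) (hm_diff α hα))]
  exact smul_pressure_gradient_eq g (h x) (ρ α x) l α _ _ _ _ _ (fun β => grad2 (m β) x)
    (by rw [sum_Icc_split l hα1 hαM, hlsum]) hm_grad

/-- On an open set `U ⊆ ℝ²`, with gravity `g`, `M ≥ 1` layers, layer proportions
`l β > 0` summing to `1`, constant surface pressure `pS`, differentiable fluid height
`h`, bottom topography `zB` and layer densities `ρ α`, and with `m β = ρ β * h`,
`p̄ α = pS + (1/2) g l α m α + ∑_{β=α+1}^M g l β m β` and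
`z̄ α = zB + (1/2) l α h + ∑_{β=1}^{α-1} l β h`: for each layer index `α ∈ {1,…,M}`,
the pressure-gradient term admits the rewriting
`h (∇p̄_α + g ρ_α ∇z̄_α) = g m_α ∇(z_B + h)
  + g h² ((1/2) l_α + ∑_{β=α+1}^M l_β) ∇ρ_α + g h ∑_{β=α+1}^M l_β ∇(m_β − m_α)`
at every point of `U`. -/
theorem pressure_gradient_rewriting
    (U : Set (Fin 2 → ℝ)) (hU : IsOpen U)
    (g : ℝ) (M : ℕ) (hM : 1 ≤ M)
    (l : ℕ → ℝ) (hl : ∀ β ∈ Finset.Icc 1 M, 0 < l β)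
    (hlsum : ∑ β ∈ Finset.Icc 1 M, l β = 1)
    (pS : ℝ)
    (h zB : (Fin 2 → ℝ) → ℝ) (ρ : ℕ → (Fin 2 → ℝ) → ℝ)
    (hh : DifferentiableOn ℝ h U) (hzB : DifferentiableOn ℝ zB U)
    (hρ : ∀ α ∈ Finset.Icc 1 M, DifferentiableOn ℝ (ρ α) U)
    (m : ℕ → (Fin 2 → ℝ) → ℝ) (hm : ∀ β x, m β x = ρ β x * h x)
    (pbar zbar : ℕ → (Fin 2 → ℝ) → ℝ)
    (hpbar : ∀ α x, pbar α x =
      pS + (1 / 2) * g * l α * m α x + ∑ β ∈ Finset.Icc (α + 1) M, g * l β * m β x)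
    (hzbar : ∀ α x, zbar α x =
      zB x + (1 / 2) * l α * h x + ∑ β ∈ Finset.Icc 1 (α - 1), l β * h x) :
    ∀ α ∈ Finset.Icc 1 M, ∀ x ∈ U,
      h x • (grad2 (pbar α) x + (g * ρ α x) • grad2 (zbar α) x) =
        (g * m α x) • grad2 (fun y => zB y + h y) x
        + (g * h x ^ 2 * ((1 / 2) * l α + ∑ β ∈ Finset.Icc (α + 1) M, l β)) • grad2 (ρ α) x
        + (g * h x) • ∑ β ∈ Finset.Icc (α + 1) M, l β • grad2 (fun y => m β y - m α y) x :=
  pressure_gradient_rewriting_general U hU g M l hlsum pS h zB ρ hh hzB hρ m hm pbar zbar hpbar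
    hzbar
end

section
/- The linear map T : ℝ^M → ℝ^M defined by (Tq)_α := q_α − (Δt/l_α) [ κ_{α+1/2} (q_{α+1}/m_{α+1} − q_α/m_α) − κ_{α−1/2} (q_α/m_α − q_{α−1}/m_{α−1}) ] (where the terms involving κ_{1/2} and κ_{M+1/2} vanish) is bijective; hence the linearly implicit viscous step of the scheme, which amounts to a tridiagonal linear system, has a unique solution. -/
/-- Fix `M ≥ 1` layers, a time step `Δt > 0`, positive layer proportions `l α`, positive
layer masses `m α`, and nonnegative viscous coefficients `κ j` for the interior
interfaces (indexed so that `κ j` is the coefficient of the interface below the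
`(j+1)`-st layer; the boundary terms involving `κ_{1/2}` and `κ_{M+1/2}` vanish, which
is encoded by the `if` clauses). The linear map `T : ℝ^M → ℝ^M` defined by
`(T q) α = q α - (Δt / l α) [ κ_{α+1/2} (q_{α+1}/m_{α+1} - q_α/m_α)
  - κ_{α-1/2} (q_α/m_α - q_{α-1}/m_{α-1}) ]`
is bijective; hence the linearly implicit viscous step of the scheme, a tridiagonal
linear system, has a unique solution. -/
theorem viscous_step_bijective
    (M : ℕ) (hM : 1 ≤ M) (Δt : ℝ) (hΔt : 0 < Δt)
    (l m : Fin M → ℝ) (hl : ∀ α, 0 < l α) (hm : ∀ α, 0 < m α)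
    (κ : ℕ → ℝ) (hκ : ∀ j, 0 ≤ κ j)
    (T : (Fin M → ℝ) → (Fin M → ℝ))
    (hT : ∀ (q : Fin M → ℝ) (α : Fin M), T q α =
      q α - (Δt / l α) *
        ((if hup : (α : ℕ) + 1 < M then
            κ ((α : ℕ) + 1) *
              (q ⟨(α : ℕ) + 1, hup⟩ / m ⟨(α : ℕ) + 1, hup⟩ - q α / m α)
          else 0)
         - (if hdn : 0 < (α : ℕ) then
            κ (α : ℕ) *
              (q α / m α -
                q ⟨(α : ℕ) - 1, lt_of_le_of_lt (Nat.sub_le _ _) α.isLt⟩ /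
                  m ⟨(α : ℕ) - 1, lt_of_le_of_lt (Nat.sub_le _ _) α.isLt⟩)
          else 0))) :
    Function.Bijective T := by
  classical
  set F : (Fin M → ℝ) → (Fin M → ℝ) := fun q α =>
      q α - (Δt / l α) *
        ((if hup : (α : ℕ) + 1 < M then
            κ ((α : ℕ) + 1) *
              (q ⟨(α : ℕ) + 1, hup⟩ / m ⟨(α : ℕ) + 1, hup⟩ - q α / m α)
          else 0)
         - (if hdn : 0 < (α : ℕ) then
            κ (α : ℕ) *
              (q α / m α -
                q ⟨(α : ℕ) - 1, lt_of_le_of_lt (Nat.sub_le _ _) α.isLt⟩ /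
                  m ⟨(α : ℕ) - 1, lt_of_le_of_lt (Nat.sub_le _ _) α.isLt⟩)
          else 0)) with hF
  have hTF : T = F := by
    funext q α
    rw [hT]
  -- the linear map
  let L : (Fin M → ℝ) →ₗ[ℝ] (Fin M → ℝ) :=
    { toFun := F
      map_add' := by
        intro q q'
        funext α
        simp only [hF, Pi.add_apply]
        split_ifs <;> ring
      map_smul' := by
        intro c q
        funext α
        simp only [hF, Pi.smul_apply, smul_eq_mul, RingHom.id_apply]
        split_ifs <;> ring }
  have hLF : ∀ q, L q = F q := fun _ => rfl
  haveI : Nonempty (Fin M) := ⟨⟨0, hM⟩⟩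
  -- kernel is trivial (maximum principle)
  have hker : ∀ q : Fin M → ℝ, F q = 0 → q = 0 := by
    intro q hq
    have hFα : ∀ α, F q α = 0 := fun α => congrFun hq α
    set u : Fin M → ℝ := fun α => q α / m α with hu
    have key : ∀ a : Fin M, (∀ b, u b ≤ u a) → q a ≤ 0 := by
      intro a ha
      have h0 := hFα a
      simp only [hF] at h0
      have hq0 : q a = (Δt / l a) *
          ((if hup : (a : ℕ) + 1 < M then
            κ ((a : ℕ) + 1) *
              (q ⟨(a : ℕ) + 1, hup⟩ / m ⟨(a : ℕ) + 1, hup⟩ - q a / m a)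
          else 0)
         - (if hdn : 0 < (a : ℕ) then
            κ (a : ℕ) *
              (q a / m a -
                q ⟨(a : ℕ) - 1, lt_of_le_of_lt (Nat.sub_le _ _) a.isLt⟩ /
                  m ⟨(a : ℕ) - 1, lt_of_le_of_lt (Nat.sub_le _ _) a.isLt⟩)
          else 0)) := by linarith
      have hup_le : (if hup : (a : ℕ) + 1 < M then
            κ ((a : ℕ) + 1) *
              (q ⟨(a : ℕ) + 1, hup⟩ / m ⟨(a : ℕ) + 1, hup⟩ - q a / m a)
          else 0) ≤ 0 := by
        split_ifs with hup
        · exact mul_nonpos_iff.mpr (Or.inl ⟨hκ _, sub_nonpos.mpr (ha ⟨(a : ℕ) + 1, hup⟩)⟩)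
        · exact le_refl 0
      have hdn_ge : 0 ≤ (if hdn : 0 < (a : ℕ) then
            κ (a : ℕ) *
              (q a / m a -
                q ⟨(a : ℕ) - 1, lt_of_le_of_lt (Nat.sub_le _ _) a.isLt⟩ /
                  m ⟨(a : ℕ) - 1, lt_of_le_of_lt (Nat.sub_le _ _) a.isLt⟩)
          else 0) := by
        split_ifs with hdn
        · exact mul_nonneg (hκ _) (sub_nonneg.mpr (ha _))
        · exact le_refl 0
      have hdiv : 0 < Δt / l a := div_pos hΔt (hl a)
      nlinarith
    have key' : ∀ a : Fin M, (∀ b, u a ≤ u b) → 0 ≤ q a := by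
      intro a ha
      have h0 := hFα a
      simp only [hF] at h0
      have hup_ge : 0 ≤ (if hup : (a : ℕ) + 1 < M then
            κ ((a : ℕ) + 1) *
              (q ⟨(a : ℕ) + 1, hup⟩ / m ⟨(a : ℕ) + 1, hup⟩ - q a / m a)
          else 0) := by
        split_ifs with hup
        · exact mul_nonneg (hκ _) (sub_nonneg.mpr (ha ⟨(a : ℕ) + 1, hup⟩))
        · exact le_refl 0
      have hdn_le : (if hdn : 0 < (a : ℕ) then
            κ (a : ℕ) *
              (q a / m a -
                q ⟨(a : ℕ) - 1, lt_of_le_of_lt (Nat.sub_le _ _) a.isLt⟩ /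
                  m ⟨(a : ℕ) - 1, lt_of_le_of_lt (Nat.sub_le _ _) a.isLt⟩)
          else 0) ≤ 0 := by
        split_ifs with hdn
        · exact mul_nonpos_iff.mpr (Or.inl ⟨hκ _, sub_nonpos.mpr (ha _)⟩)
        · exact le_refl 0
      have hdiv : 0 < Δt / l a := div_pos hΔt (hl a)
      nlinarith
    obtain ⟨a, ha⟩ := Finite.exists_max u
    obtain ⟨b, hb⟩ := Finite.exists_min u
    have hqa : q a ≤ 0 := key a ha
    have hqb : 0 ≤ q b := key' b hb
    have hua : u a ≤ 0 := by
      have := div_nonpos_iff.mpr (Or.inr ⟨hqa, le_of_lt (hm a)⟩)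
      exact this
    have hub : 0 ≤ u b := le_div_iff₀ (hm b) |>.mpr (by simpa using hqb)
    funext c
    have h1 : u c ≤ 0 := le_trans (ha c) hua
    have h2 : 0 ≤ u c := le_trans hub (hb c)
    have huc : u c = 0 := le_antisymm h1 h2
    have : q c / m c = 0 := huc
    have := (div_eq_zero_iff.mp this).resolve_right (ne_of_gt (hm c))
    simpa using this
  have hLker : ∀ q : Fin M → ℝ, L q = 0 → q = 0 := hker
  have hinj : Function.Injective L := by
    rw [← LinearMap.ker_eq_bot]
    exact LinearMap.ker_eq_bot'.mpr hLker
  have hsurj : Function.Surjective L := (LinearMap.injective_iff_surjective).mp hinj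
  rw [hTF]
  exact ⟨hinj, hsurj⟩
end

section
/- Assume ρ > 0 on U and that the continuity equation ∂_t ρ + div_x(ρ ṽ) + ρ ∂_z w(x̃, z, t) = R holds for every (x̃, t) ∈ U and every z with z⁻(x̃,t) ≤ z ≤ z⁺(x̃,t). Then the layer-integrated mass balance holds: ∂_t(ρ h) + div_x(ρ h ṽ) = G⁺ − G⁻ + h R on U, where G⁺ := ρ (∂_t z⁺ + ṽ · ∇_x z⁺ − w(·, z⁺, ·)) and G⁻ := ρ (∂_t z⁻ + ṽ · ∇_x z⁻ − w(·, z⁻, ·)) are the normal mass fluxes at the top and bottom interfaces of the layer. -/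
/-- Partial derivative with respect to time of a scalar field on horizontal
space-time `ℝ² × ℝ`. -/
noncomputable def pdt2 (f : ((Fin 2 → ℝ) × ℝ) → ℝ) (p : (Fin 2 → ℝ) × ℝ) : ℝ :=
  fderiv ℝ f p (0, 1)

/-- Divergence in the two horizontal variables of a vector field on `ℝ² × ℝ`. -/
noncomputable def div2 (V : ((Fin 2 → ℝ) × ℝ) → Fin 2 → ℝ) (p : (Fin 2 → ℝ) × ℝ) : ℝ :=
  ∑ k : Fin 2, fderiv ℝ (fun q => V q k) p ((Pi.single k 1 : Fin 2 → ℝ), (0 : ℝ))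

/-- Gradient in the two horizontal variables of a scalar field on `ℝ² × ℝ`. -/
noncomputable def gradx2 (f : ((Fin 2 → ℝ) × ℝ) → ℝ) (p : (Fin 2 → ℝ) × ℝ) : Fin 2 → ℝ :=
  fun k => fderiv ℝ f p ((Pi.single k 1 : Fin 2 → ℝ), (0 : ℝ))

/-!
Since `ρ` and `ṽ` do not depend on `z`, the continuity equation says that `z ↦ ρ w(x̃, z, t)` has
the constant derivative `R - ∂ₜ ρ - div_x(ρ ṽ)` across the layer, so that
`ρ (w(z⁺) - w(z⁻)) = h (R - ∂ₜ ρ - div_x(ρ ṽ))`. On the other hand the product rule gives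
`∂ₜ(ρ h) + div_x(ρ h ṽ) = h (∂ₜ ρ + div_x(ρ ṽ)) + ρ (∂ₜ h + ṽ · ∇_x h)`, and the material derivative
`∂ₜ h + ṽ · ∇_x h` is the difference of those of `z⁺` and `z⁻`.
-/

open Set

theorem sub_eq_smul_of_derivWithin_Icc_eq_const {E : Type*} [NormedAddCommGroup E]
    [NormedSpace ℝ E] {f : ℝ → E} {a b : ℝ} {c : E} (hab : a ≤ b)
    (hf : DifferentiableOn ℝ f (Icc a b)) (hderiv : ∀ x ∈ Ico a b, derivWithin f (Icc a b) x = c) :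
    f b - f a = (b - a) • c := by
  have hlin : ∀ x ∈ Ico a b, HasDerivWithinAt (fun y => f a + (y - a) • c) c (Ici x) x :=
    fun x _ => by
      simpa using (((hasDerivAt_id x).sub_const a).smul_const c).hasDerivWithinAt.const_add (f a)
  have hf' : ∀ x ∈ Ico a b, HasDerivWithinAt f c (Ici x) x := fun x hx =>
    hderiv x hx ▸ (hf x (Ico_subset_Icc_self hx)).hasDerivWithinAt.mono_of_mem_nhdsWithin
      (Icc_mem_nhdsGE_of_mem hx)
  have := eq_of_has_deriv_right_eq hf' hlin hf.continuousOn (by fun_prop) (by simp) b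
    (right_mem_Icc.2 hab)
  rw [this, add_sub_cancel_left]

theorem fderiv_mul_apply {E : Type*} [NormedAddCommGroup E] [NormedSpace ℝ E] {f g : E → ℝ}
    {p : E} (hf : DifferentiableAt ℝ f p) (hg : DifferentiableAt ℝ g p) (v : E) :
    fderiv ℝ (fun q => f q * g q) p v = f p * fderiv ℝ g p v + g p * fderiv ℝ f p v := by
  simp [fderiv_fun_mul hf hg]

noncomputable def materialDeriv2 (V : ((Fin 2 → ℝ) × ℝ) → Fin 2 → ℝ) (g : ((Fin 2 → ℝ) × ℝ) → ℝ)
    (p : (Fin 2 → ℝ) × ℝ) : ℝ :=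
  pdt2 g p + ∑ k, V p k * gradx2 g p k

section ProductRules

variable {f g : ((Fin 2 → ℝ) × ℝ) → ℝ} {V : ((Fin 2 → ℝ) × ℝ) → Fin 2 → ℝ} {p : (Fin 2 → ℝ) × ℝ}

theorem materialDeriv2_sub (hf : DifferentiableAt ℝ f p) (hg : DifferentiableAt ℝ g p) :
    materialDeriv2 V (fun q => f q - g q) p = materialDeriv2 V f p - materialDeriv2 V g p := by
  simp only [materialDeriv2, pdt2, gradx2, fderiv_fun_sub hf hg, sub_apply,
    mul_sub, Finset.sum_sub_distrib]
  ring

theorem pdt2_add_div2_mul_smul (hf : DifferentiableAt ℝ f p) (hg : DifferentiableAt ℝ g p)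
    (hV : DifferentiableAt ℝ V p) :
    pdt2 (fun q => f q * g q) p + div2 (fun q => (f q * g q) • V q) p
      = g p * (pdt2 f p + div2 (fun q => f q • V q) p) + f p * materialDeriv2 V g p := by
  have hfV : ∀ k, DifferentiableAt ℝ (fun q => f q * V q k) p := fun k =>
    hf.mul (differentiableAt_pi.mp hV k)
  have hcomp : ∀ k, (fun q => f q * g q * V q k) = fun q => g q * (f q * V q k) := fun k => by
    ext q; ring
  simp only [div2, Pi.smul_apply, smul_eq_mul, hcomp]
  simp only [materialDeriv2, pdt2, gradx2, fderiv_mul_apply hf hg,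
    fderiv_mul_apply hg (hfV _), Fin.sum_univ_two]
  ring

end ProductRules

theorem layer_integrated_mass_balance_general
    (U : Set ((Fin 2 → ℝ) × ℝ)) (hU : IsOpen U)
    (zm zp : ((Fin 2 → ℝ) × ℝ) → ℝ)
    (hzm : DifferentiableOn ℝ zm U) (hzp : DifferentiableOn ℝ zp U)
    (hzlt : ∀ p ∈ U, zm p < zp p)
    (ρ : ((Fin 2 → ℝ) × ℝ) → ℝ) (vh : ((Fin 2 → ℝ) × ℝ) → Fin 2 → ℝ)
    (hρd : DifferentiableOn ℝ ρ U) (hvd : DifferentiableOn ℝ vh U)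
    (R : ((Fin 2 → ℝ) × ℝ) → ℝ)
    (w : (Fin 2 → ℝ) → ℝ → ℝ → ℝ)
    (hw : ∀ p ∈ U, DifferentiableOn ℝ (fun z => w p.1 z p.2) (Set.Icc (zm p) (zp p)))
    (hcont : ∀ p ∈ U, ∀ z ∈ Set.Icc (zm p) (zp p),
      pdt2 ρ p + div2 (fun q => ρ q • vh q) p
        + ρ p * derivWithin (fun ζ => w p.1 ζ p.2) (Set.Icc (zm p) (zp p)) z = R p) :
    ∀ p ∈ U,
      pdt2 (fun q => ρ q * (zp q - zm q)) p
        + div2 (fun q => (ρ q * (zp q - zm q)) • vh q) p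
      = ρ p * (pdt2 zp p + (∑ k, vh p k * gradx2 zp p k) - w p.1 (zp p) p.2)
        - ρ p * (pdt2 zm p + (∑ k, vh p k * gradx2 zm p k) - w p.1 (zm p) p.2)
        + (zp p - zm p) * R p := by
  intro p hp
  have hmem : U ∈ nhds p := hU.mem_nhds hp
  have hρp := (hρd p hp).differentiableAt hmem
  have hzmp := (hzm p hp).differentiableAt hmem
  have hzpp := (hzp p hp).differentiableAt hmem
  have hflux : ρ p * w p.1 (zp p) p.2 - ρ p * w p.1 (zm p) p.2
      = (zp p - zm p) * (R p - (pdt2 ρ p + div2 (fun q => ρ q • vh q) p)) := by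
    refine sub_eq_smul_of_derivWithin_Icc_eq_const (hzlt p hp).le ((hw p hp).const_mul (ρ p))
      fun z hz => ?_
    have hz' := Ico_subset_Icc_self hz
    rw [derivWithin_const_mul _ (hw p hp z hz')]
    linarith [hcont p hp z hz']
  rw [pdt2_add_div2_mul_smul hρp (hzpp.fun_sub hzmp) ((hvd p hp).differentiableAt hmem),
    materialDeriv2_sub hzpp hzmp]
  unfold materialDeriv2
  linear_combination hflux

/-- On an open set `U` of horizontal space-time points `(x̃, t)`, with differentiable
interfaces `zm < zp`, layer thickness `h = zp - zm`, differentiable layer density `ρ`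
and horizontal velocity `ṽ` (independent of `z`), reaction term `R`, and vertical
velocity `w(x̃, z, t)` differentiable in `z` on `[zm, zp]`: if `ρ > 0` on `U` and the
continuity equation `∂ₜ ρ + div_x(ρ ṽ) + ρ ∂_z w = R` holds for every `(x̃, t) ∈ U`
and every `z ∈ [zm, zp]`, then the layer-integrated mass balance
`∂ₜ(ρ h) + div_x(ρ h ṽ) = G⁺ - G⁻ + h R` holds on `U`, where
`G⁺ = ρ (∂ₜ zp + ṽ · ∇_x zp - w(·, zp, ·))` and
`G⁻ = ρ (∂ₜ zm + ṽ · ∇_x zm - w(·, zm, ·))`. -/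
theorem layer_integrated_mass_balance
    (U : Set ((Fin 2 → ℝ) × ℝ)) (hU : IsOpen U)
    (zm zp : ((Fin 2 → ℝ) × ℝ) → ℝ)
    (hzm : DifferentiableOn ℝ zm U) (hzp : DifferentiableOn ℝ zp U)
    (hzlt : ∀ p ∈ U, zm p < zp p)
    (ρ : ((Fin 2 → ℝ) × ℝ) → ℝ) (vh : ((Fin 2 → ℝ) × ℝ) → Fin 2 → ℝ)
    (hρd : DifferentiableOn ℝ ρ U) (hvd : DifferentiableOn ℝ vh U)
    (R : ((Fin 2 → ℝ) × ℝ) → ℝ)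
    (w : (Fin 2 → ℝ) → ℝ → ℝ → ℝ)
    (hw : ∀ p ∈ U, DifferentiableOn ℝ (fun z => w p.1 z p.2) (Set.Icc (zm p) (zp p)))
    (hρpos : ∀ p ∈ U, 0 < ρ p)
    (hcont : ∀ p ∈ U, ∀ z ∈ Set.Icc (zm p) (zp p),
      pdt2 ρ p + div2 (fun q => ρ q • vh q) p
        + ρ p * derivWithin (fun ζ => w p.1 ζ p.2) (Set.Icc (zm p) (zp p)) z = R p) :
    ∀ p ∈ U,
      pdt2 (fun q => ρ q * (zp q - zm q)) p
        + div2 (fun q => (ρ q * (zp q - zm q)) • vh q) p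
      = ρ p * (pdt2 zp p + (∑ k, vh p k * gradx2 zp p k) - w p.1 (zp p) p.2)
        - ρ p * (pdt2 zm p + (∑ k, vh p k * gradx2 zm p k) - w p.1 (zm p) p.2)
        + (zp p - zm p) * R p :=
  layer_integrated_mass_balance_general U hU zm zp hzm hzp hzlt ρ vh hρd hvd R w hw hcont
end
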